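/- Let K ⊂ ℝⁿ be a centrally symmetric convex body which is 2-convex with constant α ∈ (0,1). Then the norm ‖·‖_K has cotype 2 with constant at most C/√α for a universal constant C > 0; more precisely, for every m ≥ 1 and every x₁, …, x_m ∈ ℝⁿ: 2^{−m} Σ_{ε∈{−1,1}^m} ‖Σ_{i=1}^m ε_i x_i‖_K² ≥ α · Σ_{i=1}^m ‖x_i‖_K². -/

import Mathlib

open MeasureTheory
open scoped RealInnerProductSpace

noncomputable section

/-- A centrally symmetric convex body: compact, convex, with nonempty interior,
and symmetric about the origin. -/
def IsSymmConvexBody {E : Type*} [NormedAddCommGroup E] [NormedSpace ℝ E]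
    (K : Set E) : Prop :=
  IsCompact K ∧ Convex ℝ K ∧ (interior K).Nonempty ∧ K = -K

/-- The modulus of convexity of `K`, defined via the gauge (Minkowski functional) of `K`. -/
def modulusOfConvexity {E : Type*} [AddCommGroup E] [Module ℝ E]
    (K : Set E) (ε : ℝ) : ℝ :=
  sInf { d | ∃ x y : E, gauge K x ≤ 1 ∧ gauge K y ≤ 1 ∧ ε ≤ gauge K (x - y) ∧
    d = 1 - gauge K ((2:ℝ)⁻¹ • (x + y)) }

/-- `K` is 2-convex with constant `α`: `δ_K(ε) ≥ α ε²` for all `0 < ε ≤ 2`. -/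
def IsTwoConvex {E : Type*} [AddCommGroup E] [Module ℝ E]
    (K : Set E) (α : ℝ) : Prop :=
  ∀ ε : ℝ, 0 < ε → ε ≤ 2 → α * ε ^ 2 ≤ modulusOfConvexity K ε


/-!
Averaging over the last sign reduces the cotype inequality, by induction on `m`, to the
two-point inequality `2‖u‖² + 2α‖v‖² ≤ ‖u + v‖² + ‖u - v‖²`. For the latter write
`s = ‖u‖, t = ‖v‖, A = ‖u + v‖ ≥ B = ‖u - v‖`. Uniform convexity applied to `u + v, u - v`
gives `A s + 4α t² ≤ A²`, and applied to the pair `B (u + v), A (u - v)` of equal norm `AB`,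
whose sum and difference are bounded below by the triangle inequality, it gives
`2α ((A + B) t - (A - B) s)² ≤ A² B (A + B - 2s)`. Together with the triangle inequalities
between `s, t, A, B` these force the two-point inequality.
-/

theorem two_point_scalar_of_sq_le {s t A B α : ℝ} (ht : 0 < t) (hBs : B < s)
    (h2t : 2 * t ≤ A + B) (hα : 0 < α) (hst : s ^ 2 ≤ (1 - 2 * α) * t ^ 2) :
    2 * s ^ 2 + 2 * α * t ^ 2 ≤ A ^ 2 + B ^ 2 := by
  have hs_le_t : s ≤ t := by nlinarith
  nlinarith [mul_nonneg (sub_nonneg.2 hBs.le) (sub_nonneg.2 (hBs.le.trans hs_le_t)),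
    sq_nonneg (s + t - B)]

theorem two_point_scalar_of_le_sq {s t A B α : ℝ} (ht : 0 < t) (hB : 0 < B) (hBs : B < s)
    (h2s : 2 * s ≤ A + B) (hA : A ≤ s + t) (hBA : B ≤ A) (hα : 0 < α) (hα4 : 4 * α ≤ 1)
    (hst : (1 - 2 * α) * t ^ 2 ≤ s ^ 2)
    (hpair : 2 * α * ((A + B) * t - (A - B) * s) ^ 2 ≤ A ^ 2 * B * (A + B - 2 * s)) :
    2 * s ^ 2 + 2 * α * t ^ 2 ≤ A ^ 2 + B ^ 2 := by
  have hs : 0 < s := hB.trans hBs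
  set P := A + B - 2 * s
  set w := 2 * t - (A - B)
  have hP : 0 ≤ P := by linarith
  have hw : 0 ≤ w := by linarith
  have hst8 : (s + t) ^ 2 ≤ 8 * (1 - α) * s ^ 2 := by
    nlinarith [sq_nonneg (4 * (1 - 2 * α) * s - t), mul_nonneg (mul_nonneg
      (by linarith : (0 : ℝ) ≤ 1 - 4 * α) (by linarith : (0 : ℝ) ≤ 7 - 12 * α)) (sq_nonneg t),
      mul_pos hs ht]
  have hsw : s * w ≤ (A + B) * t - (A - B) * s := by nlinarith [mul_nonneg hP ht.le]
  have hA2B : A ^ 2 * B ≤ (s + t) ^ 2 * s :=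
    mul_le_mul (pow_le_pow_left₀ (hB.le.trans hBA) hA 2) hBs.le hB.le (by positivity)
  have hsw2 : 2 * α * (s * w) ^ 2 ≤ 8 * (1 - α) * s ^ 2 * s * P :=
    calc 2 * α * (s * w) ^ 2 ≤ 2 * α * ((A + B) * t - (A - B) * s) ^ 2 := by gcongr
      _ ≤ A ^ 2 * B * P := hpair
      _ ≤ (s + t) ^ 2 * s * P := by gcongr
      _ ≤ 8 * (1 - α) * s ^ 2 * s * P := by gcongr
  have hwP : α * w ^ 2 ≤ 4 * (1 - α) * (s * P) := by
    have : 0 < 2 * s ^ 2 := by positivity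
    nlinarith
  -- `2t = (A - B) + w`; the worst `w` makes the remainder a perfect square.
  have ht2 : 4 * α * t ^ 2 ≤ 4 * s * P + (A - B) ^ 2 := by
    nlinarith [sq_nonneg ((1 - α) * (A - B) - α * w)]
  nlinarith [sq_nonneg P]

theorem two_point_scalar {s t A B α : ℝ} (hs : 0 ≤ s) (ht : 0 < t) (hB : 0 ≤ B) (hBA : B ≤ A)
    (hα : 0 < α) (hα4 : 4 * α ≤ 1) (h2s : 2 * s ≤ A + B) (h2t : 2 * t ≤ A + B)
    (hA : A ≤ s + t) (hA2 : A * s + 4 * α * t ^ 2 ≤ A ^ 2)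
    (hpair : 0 < B → 0 ≤ (A + B) * t - (A - B) * s →
      2 * α * ((A + B) * t - (A - B) * s) ^ 2 ≤ A ^ 2 * B * (A + B - 2 * s)) :
    2 * s ^ 2 + 2 * α * t ^ 2 ≤ A ^ 2 + B ^ 2 := by
  rcases le_or_gt s B with hsB | hBs
  · nlinarith [mul_le_mul_of_nonneg_left hBA hs, mul_le_mul hsB hsB hs hB]
  rcases hB.eq_or_lt with rfl | hB
  · obtain rfl : s = t := by linarith
    nlinarith
  rcases lt_or_ge ((A + B) * t - (A - B) * s) 0 with hN | hN
  · have hsum : A + B = 2 * s := by nlinarith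
    have hdiff : A - B = 2 * t := by nlinarith
    nlinarith
  rcases le_total (s ^ 2) ((1 - 2 * α) * t ^ 2) with hcase | hcase
  · exact two_point_scalar_of_sq_le ht hBs h2t hα hcase
  · exact two_point_scalar_of_le_sq ht hB hBs h2s hA hBA hα hα4 hcase (hpair hB hN)

namespace Seminorm

variable {E : Type*} [AddCommGroup E] [Module ℝ E]

theorem map_smul_of_nonneg (p : Seminorm ℝ E) {r : ℝ} (hr : 0 ≤ r) (x : E) :
    p (r • x) = r * p x := by
  rw [map_smul_eq_mul, Real.norm_of_nonneg hr]

def IsTwoUniformlyConvex (p : Seminorm ℝ E) (α : ℝ) : Prop :=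
  ∀ x y, p x ≤ 1 → p y ≤ 1 → p (x + y) / 2 + α * p (x - y) ^ 2 ≤ 1

namespace IsTwoUniformlyConvex

variable {p : Seminorm ℝ E} {α : ℝ}

theorem midpoint_le (hp : p.IsTwoUniformlyConvex α) {M : ℝ} (hM : 0 ≤ M) {a b : E}
    (ha : p a ≤ M) (hb : p b ≤ M) :
    M * (p (a + b) / 2) + α * p (a - b) ^ 2 ≤ M ^ 2 := by
  rcases hM.eq_or_lt with rfl | hM
  · have hab : p (a - b) = 0 :=
      le_antisymm ((map_sub_le_add p a b).trans (by linarith)) (apply_nonneg p _)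
    simp [hab]
  have hsmul := p.map_smul_of_nonneg (inv_nonneg.2 hM.le)
  have h := hp (M⁻¹ • a) (M⁻¹ • b)
    (by rw [hsmul]; exact inv_mul_le_one_of_le₀ ha hM.le)
    (by rw [hsmul]; exact inv_mul_le_one_of_le₀ hb hM.le)
  rw [← smul_add, ← smul_sub, hsmul, hsmul] at h
  have h' := mul_le_mul_of_nonneg_left h (sq_nonneg M)
  field_simp at h'
  nlinarith

theorem four_mul_le_one (hp : p.IsTwoUniformlyConvex α) {v : E} (hv : p v ≠ 0) :
    4 * α ≤ 1 := by
  have h := hp.midpoint_le (apply_nonneg p v) le_rfl (map_neg_eq_map p v).le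
  rw [add_neg_cancel, map_zero, sub_neg_eq_add, ← two_smul ℝ v,
    p.map_smul_of_nonneg zero_le_two] at h
  have hv2 : 0 < p v ^ 2 := by positivity
  nlinarith

theorem sq_le_of_normalized_pair (hp : p.IsTwoUniformlyConvex α) (hα : 0 ≤ α) {u v : E}
    (hB : 0 < p (u - v)) (hBA : p (u - v) ≤ p (u + v))
    (hN : 0 ≤ (p (u + v) + p (u - v)) * p v - (p (u + v) - p (u - v)) * p u) :
    2 * α * ((p (u + v) + p (u - v)) * p v - (p (u + v) - p (u - v)) * p u) ^ 2 ≤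
      p (u + v) ^ 2 * p (u - v) * (p (u + v) + p (u - v) - 2 * p u) := by
  have hA : 0 < p (u + v) := hB.trans_le hBA
  have hx : p (p (u - v) • (u + v)) = p (u + v) * p (u - v) := by
    rw [p.map_smul_of_nonneg hB.le, mul_comm]
  have hy : p (p (u + v) • (u - v)) = p (u + v) * p (u - v) := p.map_smul_of_nonneg hA.le _
  have h := hp.midpoint_le (by positivity) hx.le hy.le
  have hsum : p (u + v) * (2 * p u - p (u + v) + p (u - v)) ≤
      p (p (u - v) • (u + v) + p (u + v) • (u - v)) := by
    have := map_add_le_add p (p (u - v) • (u + v) + p (u + v) • (u - v))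
      ((p (u + v) - p (u - v)) • (u + v))
    rw [show p (u - v) • (u + v) + p (u + v) • (u - v) + (p (u + v) - p (u - v)) • (u + v)
        = (2 * p (u + v)) • u by module,
      p.map_smul_of_nonneg (by positivity), p.map_smul_of_nonneg (by linarith)] at this
    linarith
  have hdiff : (p (u + v) + p (u - v)) * p v - (p (u + v) - p (u - v)) * p u ≤
      p (p (u - v) • (u + v) - p (u + v) • (u - v)) := by
    have := map_add_le_add p (p (u - v) • (u + v) - p (u + v) • (u - v))
      ((p (u + v) - p (u - v)) • u)
    rw [show p (u - v) • (u + v) - p (u + v) • (u - v) + (p (u + v) - p (u - v)) • u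
        = (p (u + v) + p (u - v)) • v by module,
      p.map_smul_of_nonneg (by positivity), p.map_smul_of_nonneg (by linarith)] at this
    linarith
  have hdiff2 := pow_le_pow_left₀ hN hdiff 2
  have := mul_le_mul_of_nonneg_left hsum (by positivity : 0 ≤ p (u + v) * p (u - v))
  nlinarith [mul_le_mul_of_nonneg_left hdiff2 hα]

theorem two_point_of_le (hp : p.IsTwoUniformlyConvex α) (hα : 0 < α) {u v : E}
    (hBA : p (u - v) ≤ p (u + v)) :
    2 * p u ^ 2 + 2 * α * p v ^ 2 ≤ p (u + v) ^ 2 + p (u - v) ^ 2 := by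
  have htri : ∀ {x y z : E}, x = y + z → p x ≤ p y + p z := fun h => h ▸ map_add_le_add p _ _
  have h2u := p.map_smul_of_nonneg zero_le_two u
  have h2v := p.map_smul_of_nonneg zero_le_two v
  have hneg := map_neg_eq_map p (u - v)
  have h2s : 2 * p u ≤ p (u + v) + p (u - v) := h2u ▸ htri (by module)
  have h2t : 2 * p v ≤ p (u + v) + p (u - v) := hneg ▸ h2v ▸ htri (by module)
  have hst : p u ≤ p (u - v) + p v := htri (by module)
  rcases (apply_nonneg p v).eq_or_lt with ht0 | ht
  · rw [← ht0] at hst ⊢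
    nlinarith [apply_nonneg p u]
  have hA2 : p (u + v) * p u + 4 * α * p v ^ 2 ≤ p (u + v) ^ 2 := by
    have h := hp.midpoint_le (apply_nonneg p _) le_rfl hBA
    rw [show u + v + (u - v) = (2 : ℝ) • u by module,
      show u + v - (u - v) = (2 : ℝ) • v by module, h2u, h2v] at h
    linarith
  exact two_point_scalar (apply_nonneg p u) ht (apply_nonneg p _) hBA hα
    (hp.four_mul_le_one ht.ne') h2s h2t (map_add_le_add p u v) hA2
    fun hB hN => hp.sq_le_of_normalized_pair hα.le hB hBA hN

theorem two_point (hp : p.IsTwoUniformlyConvex α) (hα : 0 < α) (u v : E) :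
    2 * p u ^ 2 + 2 * α * p v ^ 2 ≤ p (u + v) ^ 2 + p (u - v) ^ 2 := by
  rcases le_total (p (u - v)) (p (u + v)) with h | h
  · exact hp.two_point_of_le hα h
  · have := hp.two_point_of_le hα (v := -v) (by rwa [sub_neg_eq_add, ← sub_eq_add_neg])
    rwa [map_neg_eq_map, ← sub_eq_add_neg, sub_neg_eq_add, add_comm (p (u - v) ^ 2)] at this

theorem cotype_two (hp : p.IsTwoUniformlyConvex α) (hα : 0 < α) :
    ∀ (m : ℕ) (x : Fin m → E), α * ∑ i, p (x i) ^ 2 ≤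
      ((2 : ℝ) ^ m)⁻¹ * ∑ ε : Fin m → Bool, p (∑ i, (if ε i then (1 : ℝ) else -1) • x i) ^ 2
  | 0, x => by simp
  | m + 1, x => by
    set S : (Fin m → Bool) → E := fun ε => ∑ i, (if ε i then (1 : ℝ) else -1) • x i.succ
    have ih : α * ∑ i : Fin m, p (x i.succ) ^ 2 ≤ ((2 : ℝ) ^ m)⁻¹ * ∑ ε, p (S ε) ^ 2 :=
      cotype_two hp hα m _
    have hsplit : ∑ ε : Fin (m + 1) → Bool, p (∑ i, (if ε i then (1 : ℝ) else -1) • x i) ^ 2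
        = ∑ ε : Fin m → Bool, (p (S ε + x 0) ^ 2 + p (S ε - x 0) ^ 2) := by
      rw [← (Fin.consEquiv fun _ => Bool).sum_comp, Fintype.sum_prod_type, Fintype.sum_bool,
        ← Finset.sum_add_distrib]
      refine Finset.sum_congr rfl fun ε _ => ?_
      simp only [Fin.consEquiv_apply, Fin.sum_univ_succ, Fin.cons_zero, Fin.cons_succ, S,
        if_true, Bool.false_eq_true, if_false, one_smul, neg_one_smul, add_comm (x 0),
        neg_add_eq_sub]
    have hpair := Finset.sum_le_sum fun ε (_ : ε ∈ Finset.univ) => hp.two_point hα (S ε) (x 0)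
    rw [Finset.sum_add_distrib, ← Finset.mul_sum, Finset.sum_const, Finset.card_univ,
      Fintype.card_fun, Fintype.card_bool, Fintype.card_fin, nsmul_eq_mul] at hpair
    push_cast at hpair
    rw [hsplit, Fin.sum_univ_succ, pow_succ]
    calc α * (p (x 0) ^ 2 + ∑ i : Fin m, p (x i.succ) ^ 2)
        ≤ α * p (x 0) ^ 2 + ((2 : ℝ) ^ m)⁻¹ * ∑ ε, p (S ε) ^ 2 := by linarith
      _ = ((2 : ℝ) ^ m * 2)⁻¹ * (2 * ∑ ε, p (S ε) ^ 2 + (2 : ℝ) ^ m * (2 * α * p (x 0) ^ 2)) := by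
          field_simp
          ring
      _ ≤ _ := mul_le_mul_of_nonneg_left hpair (by positivity)

end IsTwoUniformlyConvex

end Seminorm

section Gauge

variable {E : Type*} [AddCommGroup E] [Module ℝ E] {K : Set E}

theorem modulusOfConvexity_le (hconv : Convex ℝ K) (habs : Absorbent ℝ K) {ε : ℝ} {x y : E}
    (hx : gauge K x ≤ 1) (hy : gauge K y ≤ 1) (hxy : ε ≤ gauge K (x - y)) :
    modulusOfConvexity K ε ≤ 1 - gauge K ((2 : ℝ)⁻¹ • (x + y)) := by
  refine csInf_le ⟨0, ?_⟩ ⟨x, y, hx, hy, hxy, rfl⟩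
  rintro d ⟨x', y', hx', hy', -, rfl⟩
  rw [gauge_smul_of_nonneg (by norm_num), smul_eq_mul]
  linarith [gauge_add_le hconv habs x' y']

theorem IsTwoConvex.isTwoUniformlyConvex_gaugeSeminorm (hbal : Balanced ℝ K)
    (hconv : Convex ℝ K) (habs : Absorbent ℝ K) {α : ℝ} (h2 : IsTwoConvex K α) :
    (gaugeSeminorm hbal hconv habs).IsTwoUniformlyConvex α := by
  intro x y hx hy
  set p := gaugeSeminorm hbal hconv habs
  rcases (apply_nonneg p (x - y)).eq_or_lt with h0 | hpos
  · rw [← h0]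
    linarith [map_add_le_add p x y]
  have hmid : p (x + y) / 2 = gauge K ((2 : ℝ)⁻¹ • (x + y)) := by
    rw [gauge_smul_of_nonneg (by norm_num), smul_eq_mul, gaugeSeminorm_toFun]
    ring
  have hδ : modulusOfConvexity K (p (x - y)) ≤ 1 - gauge K ((2 : ℝ)⁻¹ • (x + y)) :=
    modulusOfConvexity_le hconv habs hx hy le_rfl
  linarith [h2 _ hpos ((map_sub_le_add p x y).trans (by linarith))]

end Gauge

namespace IsSymmConvexBody

variable {E : Type*} [NormedAddCommGroup E] [NormedSpace ℝ E] {K : Set E}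

theorem zero_mem_interior (hK : IsSymmConvexBody K) : (0 : E) ∈ interior K := by
  obtain ⟨-, hconv, ⟨z, hz⟩, hneg⟩ := hK
  have hz' : -z ∈ interior K := by
    rw [hneg]
    change -z ∈ interior (Homeomorph.neg E ⁻¹' K)
    rw [← Homeomorph.preimage_interior]
    simpa using hz
  simpa using hconv.interior hz hz' (by norm_num : (0 : ℝ) ≤ 2⁻¹) (by norm_num : (0 : ℝ) ≤ 2⁻¹)
    (by norm_num)

theorem absorbent (hK : IsSymmConvexBody K) : Absorbent ℝ K :=
  absorbent_nhds_zero (mem_interior_iff_mem_nhds.1 hK.zero_mem_interior)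

theorem balanced (hK : IsSymmConvexBody K) : Balanced ℝ K :=
  (balanced_iff_neg_mem hK.2.1).2 fun _ hx => Set.mem_neg.1 (hK.2.2.2 ▸ hx)

end IsSymmConvexBody

theorem twoConvex_cotype_two_general {n : ℕ} (K : Set (EuclideanSpace ℝ (Fin n)))
    (α : ℝ) (hK : IsSymmConvexBody K) (hα : 0 < α)
    (h2 : IsTwoConvex K α) :
    ∀ (m : ℕ), 1 ≤ m → ∀ x : Fin m → EuclideanSpace ℝ (Fin n),
      α * ∑ i, gauge K (x i) ^ 2 ≤
        ((2 : ℝ) ^ m)⁻¹ *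
          ∑ ε : Fin m → Bool,
            gauge K (∑ i, (if ε i then (1 : ℝ) else -1) • x i) ^ 2 := fun m _ =>
  (h2.isTwoUniformlyConvex_gaugeSeminorm hK.balanced hK.2.1 hK.absorbent).cotype_two hα m

theorem twoConvex_cotype_two {n : ℕ} (K : Set (EuclideanSpace ℝ (Fin n)))
    (α : ℝ) (hK : IsSymmConvexBody K) (hα : 0 < α) (hα1 : α < 1)
    (h2 : IsTwoConvex K α) :
    ∀ (m : ℕ), 1 ≤ m → ∀ x : Fin m → EuclideanSpace ℝ (Fin n),
      α * ∑ i, gauge K (x i) ^ 2 ≤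
        ((2 : ℝ) ^ m)⁻¹ *
          ∑ ε : Fin m → Bool,
            gauge K (∑ i, (if ε i then (1 : ℝ) else -1) • x i) ^ 2 :=
  twoConvex_cotype_two_general K α hK hα h2
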